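/- arXiv:2002.03243 — 3 statements merged into one kernel-verified Lean document; each statement's English description precedes it below -/
import Mathlib

section
/- For every positive integer n, the radical of the form ω restricted to W_n is exactly the line spanned by Σ_{i=1}^n (e_i − f_i); that is, a vector w ∈ W_n satisfies ω(w, w') = 0 for all w' ∈ W_n if and only if w is a scalar multiple of Σ_{i=1}^n (e_i − f_i). -/
/-!
Setup: `Vn n` is the complex vector space with basis `e_1, f_1, …, e_n, f_n`
(coordinates indexed by `Fin n ⊕ Fin n`, with `Sum.inl i ↔ e_i` and `Sum.inr i ↔ f_i`),
equipped with the alternating form `ω` with `ω(e_i, f_j) = δ_{ij}`,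
`ω(e_i,e_j) = ω(f_i,f_j) = 0`, and the linear functional `ξ` with
`ξ(e_i) = ξ(f_i) = 1`.  `Wn n = ker ξ`.
-/

noncomputable section

/-- The space `V_n` with basis `e_1, f_1, …, e_n, f_n`. -/
abbrev Vn (n : ℕ) : Type := (Fin n ⊕ Fin n) → ℂ

/-- The basis vector `e_i`. -/
def en (n : ℕ) (i : Fin n) : Vn n := Pi.single (Sum.inl i) 1

/-- The basis vector `f_i`. -/
def fn (n : ℕ) (i : Fin n) : Vn n := Pi.single (Sum.inr i) 1

/-- The symplectic form `ω` on `V_n`, determined by `ω(e_i, f_j) = δ_{ij}`,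
`ω(e_i, e_j) = ω(f_i, f_j) = 0`. -/
def omegaForm (n : ℕ) (v w : Vn n) : ℂ :=
  ∑ i : Fin n, (v (Sum.inl i) * w (Sum.inr i) - v (Sum.inr i) * w (Sum.inl i))

/-- The functional `ξ` with `ξ(e_i) = ξ(f_i) = 1` for all `i`. -/
def xiFun (n : ℕ) : Vn n →ₗ[ℂ] ℂ := ∑ j : Fin n ⊕ Fin n, LinearMap.proj j

/-- `W_n = ker ξ`. -/
def Wn (n : ℕ) : Submodule ℂ (Vn n) := LinearMap.ker (xiFun n)

/-- The vector `Σ_{i=1}^n (e_i - f_i)`. -/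
def wvec (n : ℕ) : Vn n := ∑ i : Fin n, (en n i - fn n i)

/-- Coefficient vector so that `ω(w, u) = ∑ j, cfun w j * u j`. -/
def cfun {n : ℕ} (w : Vn n) : (Fin n ⊕ Fin n) → ℂ :=
  Sum.elim (fun i => -w (Sum.inr i)) (fun i => w (Sum.inl i))

lemma xi_apply {n : ℕ} (v : Vn n) : xiFun n v = ∑ j, v j := by
  simp [xiFun]

lemma omega_eq {n : ℕ} (w u : Vn n) :
    omegaForm n w u = ∑ j, cfun w j * u j := by
  rw [Fintype.sum_sum_type]
  simp only [omegaForm, cfun, Sum.elim_inl, Sum.elim_inr, Finset.sum_sub_distrib,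
    neg_mul, Finset.sum_neg_distrib]
  ring

lemma wvec_apply {n : ℕ} (j : Fin n ⊕ Fin n) :
    wvec n j = Sum.elim (fun _ => (1:ℂ)) (fun _ => (-1:ℂ)) j := by
  cases j with
  | inl i => simp [wvec, en, fn, Finset.sum_apply, Pi.single_apply]
  | inr i => simp [wvec, en, fn, Finset.sum_apply, Pi.single_apply]

/-- The radical of `ω` restricted to `W_n` is exactly the line
spanned by `Σ_{i=1}^n (e_i - f_i)`. -/
theorem radical_omega_on_Wn (n : ℕ) (hn : 0 < n) (w : Vn n) (hw : w ∈ Wn n) :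
    (∀ w' ∈ Wn n, omegaForm n w w' = 0) ↔ ∃ c : ℂ, w = c • wvec n := by
  constructor
  · intro h
    have key : ∀ a b : Fin n ⊕ Fin n, cfun w a = cfun w b := by
      intro a b
      by_cases hab : a = b
      · rw [hab]
      have hmem : (Pi.single a 1 - Pi.single b 1 : Vn n) ∈ Wn n := by
        simp [Wn, LinearMap.mem_ker, xi_apply, Finset.sum_sub_distrib,
          Pi.single_apply]
      have := h _ hmem
      rw [omega_eq] at this
      simp only [Pi.sub_apply, Pi.single_apply, mul_sub, mul_ite, mul_one, mul_zero,
        Finset.sum_sub_distrib, Finset.sum_ite_eq', Finset.mem_univ, if_true] at this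
      exact sub_eq_zero.mp this
    refine ⟨cfun w (Sum.inl ⟨0, hn⟩), funext fun j => ?_⟩
    cases j with
    | inl i =>
      have h1 := key (Sum.inr i) (Sum.inl ⟨0, hn⟩)
      simp only [cfun, Sum.elim_inl, Sum.elim_inr] at h1
      simp [wvec_apply, cfun, h1]
    | inr i =>
      have h1 := key (Sum.inl i) (Sum.inl ⟨0, hn⟩)
      simp only [cfun, Sum.elim_inl, Sum.elim_inr] at h1
      simp [wvec_apply, cfun]
      linear_combination -h1
  · rintro ⟨c, rfl⟩ w' hw'
    have hxi : ∑ j, w' j = 0 := by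
      have := hw'
      simpa [Wn, LinearMap.mem_ker, xi_apply] using this
    rw [omega_eq]
    have : ∀ j, cfun (c • wvec n) j * w' j = c * w' j := by
      intro j
      cases j with
      | inl i => simp [cfun, wvec_apply]
      | inr i => simp [cfun, wvec_apply]
    rw [Finset.sum_congr rfl fun j _ => this j, ← Finset.mul_sum, hxi, mul_zero]

end
end

section
/- The ideal 𝔫 of C generated by {t_i − 1 : i ≥ 1} ∪ {u_i : i ≥ 1} is a maximal ideal of C, and the extension of 𝔪 along φ (the ideal of C generated by φ(𝔪)) is equal to 𝔫. -/
/-!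
Setup: `A = ℂ[x_i, y_i : i ∈ ℕ]` is the polynomial ring in countably many pairs
of variables (`x_i = X (Sum.inl i)`, `y_i = X (Sum.inr i)`).
`P = ℂ[t_i, u_i : i ∈ ℕ]` and `C' = ℂ[t_i^{±1}, u_i]` is the localization of `P`
at the multiplicative set generated by the `t_i`.  `phi : A → C'` is the unique
ℂ-algebra homomorphism with `phi(x_i) = t_i` and `phi(y_i) = t_i⁻¹ + u_i`.
`mIdeal` is the ideal of `A` generated by the `x_i − 1` and `y_i − 1`, and
`nIdeal` is the ideal of `C'` generated by the `t_i − 1` and `u_i`.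
-/

noncomputable section

open MvPolynomial

/-- `A = ℂ[x_i, y_i : i ≥ 1]`. -/
abbrev A : Type := MvPolynomial (ℕ ⊕ ℕ) ℂ

/-- `P = ℂ[t_i, u_i : i ≥ 1]` (`t_i = X (Sum.inl i)`, `u_i = X (Sum.inr i)`). -/
abbrev P : Type := MvPolynomial (ℕ ⊕ ℕ) ℂ

/-- The multiplicative set generated by the `t_i`. -/
def T : Submonoid P :=
  Submonoid.closure (Set.range fun i : ℕ => (X (Sum.inl i) : P))

/-- `C' = ℂ[t_i^{±1}, u_i : i ≥ 1]`, the localization of `P` at the `t_i`. -/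
abbrev C' : Type := Localization T

/-- The inverse `t_i⁻¹` in `C'`. -/
def tInv (i : ℕ) : C' :=
  Localization.mk 1 ⟨X (Sum.inl i), Submonoid.subset_closure (Set.mem_range_self i)⟩

/-- `phi : A → C'`, the unique ℂ-algebra homomorphism with `phi(x_i) = t_i`
and `phi(y_i) = t_i⁻¹ + u_i`. -/
def phi : A →+* C' :=
  eval₂Hom ((algebraMap P C').comp (MvPolynomial.C)) fun j =>
    match j with
    | Sum.inl i => algebraMap P C' (X (Sum.inl i))
    | Sum.inr i => tInv i + algebraMap P C' (X (Sum.inr i))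

/-- The maximal ideal `𝔪 = (x_i − 1, y_i − 1 : i ≥ 1)` of `A`. -/
def mIdeal : Ideal A := Ideal.span (Set.range fun j : ℕ ⊕ ℕ => (X j : A) - 1)

/-- The ideal `𝔫 = (t_i − 1, u_i : i ≥ 1)` of `C'`. -/
def nIdeal : Ideal C' :=
  Ideal.span ((Set.range fun i : ℕ => algebraMap P C' (X (Sum.inl i)) - 1) ∪
    (Set.range fun i : ℕ => algebraMap P C' (X (Sum.inr i))))

/-! `𝔫` is the kernel of the evaluation `C' → ℂ` at `t = 1, u = 0`. Indeed, the kernel of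
evaluating a polynomial ring at a point `a` is generated by the `X j - a j`, and the kernel of a map
out of a localization is the extension of the kernel on the ring being localized. This evaluation is
surjective, so `𝔫` is maximal. For the extension of `𝔪`, `φ(x_i - 1) = t_i - 1` and
`φ(y_i - 1) = u_i - t_i⁻¹ (t_i - 1)`, so each of the two ideals contains the generators of the
other. -/

theorem MvPolynomial.sub_C_eval_mem_span {σ R : Type*} [CommRing R] (a : σ → R)
    (p : MvPolynomial σ R) :
    p - C (eval a p) ∈ Ideal.span (Set.range fun j => X j - C (a j)) := by
  set I := Ideal.span (Set.range fun j => (X j : MvPolynomial σ R) - C (a j))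
  induction p using MvPolynomial.induction_on with
  | C c => simp
  | add p q hp hq =>
    have h : p + q - C (eval a (p + q)) = (p - C (eval a p)) + (q - C (eval a q)) := by
      simp only [map_add]; ring
    exact h ▸ I.add_mem hp hq
  | mul_X p j hp =>
    have h : p * X j - C (eval a (p * X j)) =
        (p - C (eval a p)) * C (a j) + p * (X j - C (a j)) := by
      simp only [map_mul, eval_X]; ring
    exact h ▸ I.add_mem (I.mul_mem_right _ hp) (I.mul_mem_left _ (Ideal.subset_span ⟨j, rfl⟩))

theorem MvPolynomial.ker_eval_eq_span {σ R : Type*} [CommRing R] (a : σ → R) :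
    RingHom.ker (eval a) = Ideal.span (Set.range fun j => X j - C (a j)) := by
  refine le_antisymm (fun p hp => ?_) ?_
  · simpa [RingHom.mem_ker.mp hp] using sub_C_eval_mem_span a p
  · rw [Ideal.span_le]
    rintro _ ⟨j, rfl⟩
    simp

theorem IsLocalization.ker_lift {R S K : Type*} [CommRing R] [CommRing S] [CommRing K]
    [Algebra R S] {M : Submonoid R} [IsLocalization M S] {g : R →+* K}
    (hg : ∀ y : M, IsUnit (g y)) :
    RingHom.ker (IsLocalization.lift hg : S →+* K) = (RingHom.ker g).map (algebraMap R S) := by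
  ext x
  obtain ⟨x, s, rfl⟩ := IsLocalization.exists_mk'_eq M x
  simp only [RingHom.mem_ker, IsLocalization.lift_mk'_spec, mul_zero,
    IsLocalization.mk'_mem_map_algebraMap_iff, map_mul]
  exact ⟨fun h => ⟨1, M.one_mem, by simp [h]⟩,
    fun ⟨m, hm, h⟩ => (hg ⟨m, hm⟩).mul_right_eq_zero.mp h⟩

def basePoint : ℕ ⊕ ℕ → ℂ := Sum.elim 1 0

theorem isUnit_eval_basePoint (t : T) : IsUnit (eval basePoint (t : P)) := by
  obtain ⟨t, ht⟩ := t
  induction ht using Submonoid.closure_induction with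
  | mem x hx => obtain ⟨i, rfl⟩ := hx; simp [basePoint]
  | one => simp
  | mul x y _ _ hx hy => rw [map_mul]; exact hx.mul hy

def evalBasePoint : C' →+* ℂ := IsLocalization.lift isUnit_eval_basePoint

theorem evalBasePoint_algebraMap (p : P) : evalBasePoint (algebraMap P C' p) = eval basePoint p :=
  IsLocalization.lift_eq _ p

theorem evalBasePoint_surjective : Function.Surjective evalBasePoint := fun c =>
  ⟨algebraMap P C' (C c), by rw [evalBasePoint_algebraMap, eval_C]⟩

theorem nIdeal_eq_ker_evalBasePoint : nIdeal = RingHom.ker evalBasePoint := by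
  rw [evalBasePoint, IsLocalization.ker_lift, MvPolynomial.ker_eval_eq_span, Ideal.map_span,
    ← Set.range_comp, nIdeal, ← Set.Sum.elim_range]
  congr
  funext j
  cases j <;> simp [basePoint]

theorem nIdeal_isMaximal : nIdeal.IsMaximal :=
  nIdeal_eq_ker_evalBasePoint ▸ RingHom.ker_isMaximal_of_surjective _ evalBasePoint_surjective

theorem tInv_mul_self (i : ℕ) : tInv i * algebraMap P C' (X (Sum.inl i)) = 1 := by
  rw [tInv, Localization.mk_eq_mk']
  exact (IsLocalization.mk'_spec C' 1 _).trans (map_one _)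

@[simp]
theorem phi_X_inl (i : ℕ) : phi (X (Sum.inl i)) = algebraMap P C' (X (Sum.inl i)) := by
  simp [phi]

@[simp]
theorem phi_X_inr (i : ℕ) : phi (X (Sum.inr i)) = tInv i + algebraMap P C' (X (Sum.inr i)) := by
  simp [phi]

theorem phi_X_inr_sub_one (i : ℕ) :
    phi (X (Sum.inr i) - 1) =
      algebraMap P C' (X (Sum.inr i)) - tInv i * (algebraMap P C' (X (Sum.inl i)) - 1) := by
  linear_combination (norm := (simp only [map_sub, map_one, phi_X_inr]; ring)) tInv_mul_self i

theorem map_phi_mIdeal : Ideal.map phi mIdeal = nIdeal := by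
  have ht (i : ℕ) : algebraMap P C' (X (Sum.inl i)) - 1 ∈ nIdeal :=
    Ideal.subset_span (Or.inl ⟨i, rfl⟩)
  have hu (i : ℕ) : algebraMap P C' (X (Sum.inr i)) ∈ nIdeal :=
    Ideal.subset_span (Or.inr ⟨i, rfl⟩)
  rw [mIdeal, Ideal.map_span]
  apply le_antisymm
  · rw [Ideal.span_le]
    rintro _ ⟨_, ⟨i | i, rfl⟩, rfl⟩
    · simpa using ht i
    · rw [phi_X_inr_sub_one]
      exact nIdeal.sub_mem (hu i) (nIdeal.mul_mem_left _ (ht i))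
  · set J := Ideal.span (phi '' Set.range fun j => X j - 1)
    have hx (j : ℕ ⊕ ℕ) : phi (X j - 1) ∈ J := Ideal.subset_span ⟨_, ⟨j, rfl⟩, rfl⟩
    rw [nIdeal, Ideal.span_le]
    rintro _ (⟨i, rfl⟩ | ⟨i, rfl⟩)
    · simpa using hx (Sum.inl i)
    · have h := J.add_mem (hx (Sum.inr i)) (J.mul_mem_left (tInv i) (hx (Sum.inl i)))
      rwa [phi_X_inr_sub_one, map_sub, map_one, phi_X_inl, sub_add_cancel] at h

/-- `𝔫` is a maximal ideal of `C'`, and the extension of `𝔪` along `phi`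
equals `𝔫`. -/
theorem nIdeal_isMaximal_and_map_mIdeal :
    nIdeal.IsMaximal ∧ Ideal.map phi mIdeal = nIdeal :=
  ⟨nIdeal_isMaximal, map_phi_mIdeal⟩

end
end

section
/- Let 𝔤 be a Lie algebra over a commutative ring k and let 𝔨 and 𝔥 be Lie subalgebras such that 𝔤 = 𝔨 + 𝔥 (every element of 𝔤 is a sum of an element of 𝔨 and an element of 𝔥). Suppose R is a commutative k-algebra on which 𝔤 acts by derivations, i.e., there is a Lie algebra homomorphism δ : 𝔤 → Der_k(R), and suppose 𝔞 is an ideal of R that is stable under 𝔥, i.e., δ(X)(𝔞) ⊆ 𝔞 for all X ∈ 𝔥. Let M be a 𝔤-equivariant R-module: an R-module together with a Lie algebra homomorphism ρ : 𝔤 → End_k(M) satisfying the Leibniz rule ρ(X)(r·m) = δ(X)(r)·m + r·ρ(X)(m) for all X ∈ 𝔤, r ∈ R, m ∈ M. Let N = {m ∈ M : ρ(Y_1) ∘ ⋯ ∘ ρ(Y_r)(m) ∈ 𝔞M for every finite (possibly empty) sequence Y_1, …, Y_r of elements of 𝔨} (this is the maximal 𝔨-stable submodule of M contained in 𝔞M).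 Then N is 𝔤-stable: ρ(X)(N) ⊆ N for every X ∈ 𝔤. -/
/-!
Write `X = Y + Z` with `Y ∈ 𝔨`, `Z ∈ 𝔥`. By the Leibniz rule and `δ(𝔥)𝔞 ⊆ 𝔞`, every `ρ Z` preserves
`𝔞M`, so `ρ X m = ρ Y m + ρ Z m ∈ 𝔞M` for `m ∈ N`. For a longer word in `𝔨`, move its innermost
letter `Y` past `ρ X` using `ρ Y ρ X = ρ X ρ Y + ρ ⁅Y, X⁆`; since `ρ Y m ∈ N`, both terms are handled
by induction on the length of the word, for all `X ∈ 𝔤` at once.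
-/

attribute [local instance 100] LieRing.ofAssociativeRing

section LieAction

variable {k g M : Type*} [CommRing k] [LieRing g] [LieAlgebra k g] [AddCommGroup M] [Module k M]
  (ρ : g →ₗ⁅k⁆ Module.End k M)

theorem List.foldr_lieHom_apply_eq_prod_map (l : List g) (m : M) :
    l.foldr (fun Y m' => ρ Y m') m = (l.map ρ).prod m := by
  induction l with
  | nil => rfl
  | cons Y l ih => simp [ih]

theorem LieHom.apply_apply_eq_apply_apply_add_apply_lie (X Y : g) (m : M) :
    ρ Y (ρ X m) = ρ X (ρ Y m) + ρ ⁅Y, X⁆ m := by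
  rw [ρ.map_lie, LieRing.of_associative_ring_bracket, LinearMap.sub_apply,
    Module.End.mul_apply, Module.End.mul_apply]
  abel

/-- The largest subset of `P` stable under `ρ Y` for all `Y ∈ K` (the set `N` of the statement,
with `P = 𝔞M`). -/
def stableCore (K : LieSubalgebra k g) (P : Set M) : Set M :=
  {m | ∀ l : List g, (∀ Y ∈ l, Y ∈ K) → (l.map ρ).prod m ∈ P}

variable {ρ} {K : LieSubalgebra k g} {P : Set M} {m : M}

theorem mem_of_mem_stableCore (hm : m ∈ stableCore ρ K P) : m ∈ P := by
  simpa using hm [] (by simp)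

theorem apply_mem_stableCore {Y : g} (hY : Y ∈ K) (hm : m ∈ stableCore ρ K P) :
    ρ Y m ∈ stableCore ρ K P := by
  intro l hl
  have := hm (l ++ [Y]) (by simpa [or_imp, forall_and] using ⟨hl, hY⟩)
  simpa [List.prod_append] using this

theorem apply_mem_stableCore_of_forall_eq_add (H : LieSubalgebra k g) (P : AddSubgroup M)
    (hsum : ∀ X : g, ∃ Y ∈ K, ∃ Z ∈ H, X = Y + Z)
    (hH : ∀ Z ∈ H, ∀ p ∈ P, ρ Z p ∈ P) (X : g) (hm : m ∈ stableCore ρ K P) :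
    ρ X m ∈ stableCore ρ K P := by
  intro l hl
  induction l using List.reverseRecOn generalizing X m with
  | nil =>
    obtain ⟨Y, hY, Z, hZ, rfl⟩ := hsum X
    simpa using P.add_mem (mem_of_mem_stableCore (apply_mem_stableCore hY hm))
      (hH Z hZ m (mem_of_mem_stableCore hm))
  | append_singleton l Y ih =>
    have hl' : ∀ W ∈ l, W ∈ K := fun W hW => hl W (by simp [hW])
    have hY : Y ∈ K := hl Y (by simp)
    simp only [List.map_append, List.map_singleton, List.prod_append, List.prod_singleton,
      Module.End.mul_apply]
    rw [LieHom.apply_apply_eq_apply_apply_add_apply_lie, map_add]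
    exact P.add_mem (ih X (apply_mem_stableCore hY hm) hl') (ih ⁅Y, X⁆ hm hl')

end LieAction

theorem Submodule.apply_mem_ideal_smul_top_of_leibniz {R M : Type*} [CommSemiring R]
    [AddCommMonoid M] [Module R M] {a : Ideal R} {d : R → R} (hd : ∀ r ∈ a, d r ∈ a)
    (f : M →+ M) (hf : ∀ (r : R) (m : M), f (r • m) = d r • m + r • f m)
    {p : M} (hp : p ∈ a • (⊤ : Submodule R M)) : f p ∈ a • (⊤ : Submodule R M) := by
  refine Submodule.smul_induction_on (p := fun x => f x ∈ a • ⊤) hp (fun r hr m _ => ?_)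
    (fun x y hx hy => by simpa only [map_add] using add_mem hx hy)
  rw [hf]
  exact add_mem (smul_mem_smul (hd r hr) trivial) (smul_mem_smul hr trivial)

theorem maximal_k_submodule_of_ideal_smul_is_g_stable
    (k : Type*) [CommRing k]
    (g : Type*) [LieRing g] [LieAlgebra k g]
    (K H : LieSubalgebra k g)
    (hsum : ∀ X : g, ∃ Y ∈ K, ∃ Z ∈ H, X = Y + Z)
    (R : Type*) [CommRing R] [Algebra k R]
    (δ : g →ₗ⁅k⁆ Derivation k R R)
    (a : Ideal R) (ha : ∀ X ∈ H, ∀ r ∈ a, δ X r ∈ a)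
    (M : Type*) [AddCommGroup M] [Module k M] [Module R M] [IsScalarTower k R M]
    (ρ : g →ₗ⁅k⁆ Module.End k M)
    (leibniz : ∀ (X : g) (r : R) (m : M), ρ X (r • m) = (δ X r) • m + r • (ρ X m))
    (X : g) (m : M)
    (hm : ∀ l : List g, (∀ Y ∈ l, Y ∈ K) →
      l.foldr (fun Y m' => ρ Y m') m ∈ a • (⊤ : Submodule R M)) :
    ∀ l : List g, (∀ Y ∈ l, Y ∈ K) →
      l.foldr (fun Y m' => ρ Y m') (ρ X m) ∈ a • (⊤ : Submodule R M) := by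
  let aM := (a • ⊤ : Submodule R M).toAddSubgroup
  have hH : ∀ Z ∈ H, ∀ p ∈ aM, ρ Z p ∈ aM := fun Z hZ _ =>
    Submodule.apply_mem_ideal_smul_top_of_leibniz (ha Z hZ) (ρ Z).toAddMonoidHom (leibniz Z)
  have hmN : m ∈ stableCore ρ K aM := fun l hl => by
    rw [← List.foldr_lieHom_apply_eq_prod_map]
    exact hm l hl
  intro l hl
  rw [List.foldr_lieHom_apply_eq_prod_map]
  exact apply_mem_stableCore_of_forall_eq_add H aM hsum hH X hmN l hl
end
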